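/- For the multivariate t density p on ℝ^d with ν degrees of freedom (identity scale, center 0), the unique mode is at y = 0, the negative log-density h(y) = ((ν+d)/2) log(1 + ‖y‖²/ν) + const has Hessian at 0 equal to ((ν+d)/ν) I_d, and the standard Laplace approximation of ∫ e^{-h} = 1 equals (2π ν/(ν+d))^{d/2} · Γ((ν+d)/2)/(Γ(ν/2)(νπ)^{d/2}), which tends to 0 as d → ∞ for fixed ν; hence the relative error of the Laplace approximation diverges with the dimension. -/

import Mathlib

/-!
The log-density is `-(ν + d)/2 · log (1 + ‖y‖²/ν)` up to a constant, a strictly decreasing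
function of `‖y‖²`, so the mode is `0`, and for a radial function `φ(‖y‖²)` the Hessian at `0`
is `2 φ'(0) · I`. After cancelling `(νπ)^{d/2}`, the Laplace approximation becomes
`L_d = (2/(ν+d))^{d/2} Γ((ν+d)/2) / Γ(ν/2)`, and the functional equation of `Γ` gives
`L_{d+2} / L_d = (1 - 2/(ν+d+2))^{(d+2)/2} ≤ e^{-1/2}` as soon as `ν ≤ d + 2`,
so `L_d` decays geometrically along each parity class.
-/

open MeasureTheory Real Filter

theorem tendsto_zero_of_le_mul_of_add {u : ℕ → ℝ} {s : ℝ} {k N : ℕ} (hu : 0 ≤ u) (hs0 : 0 ≤ s)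
    (hs1 : s < 1) (hk : 0 < k) (hstep : ∀ n, N ≤ n → u (n + k) ≤ s * u n) :
    Tendsto u atTop (nhds 0) := by
  set C := ∑ r ∈ Finset.range k, u (N + r)
  have hbound : ∀ j, u (N + j) ≤ C * s ^ (j / k) := by
    intro j
    induction j using Nat.strong_induction_on with
    | _ j ih =>
      rcases lt_or_ge j k with hjk | hkj
      · rw [Nat.div_eq_of_lt hjk, pow_zero, mul_one]
        exact Finset.single_le_sum (fun r _ => hu (N + r)) (Finset.mem_range.2 hjk)
      · calc u (N + j) = u (N + (j - k) + k) := by congr 1; omega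
          _ ≤ s * u (N + (j - k)) := hstep _ (Nat.le_add_right _ _)
          _ ≤ s * (C * s ^ ((j - k) / k)) := by gcongr; exact ih _ (by omega)
          _ = C * s ^ (j / k) := by rw [Nat.div_eq_sub_div hk hkj, pow_succ]; ring
  have hgeom : Tendsto (fun j => C * s ^ (j / k)) atTop (nhds 0) := by
    simpa using ((tendsto_pow_atTop_nhds_zero_of_lt_one hs0 hs1).comp
      (Nat.tendsto_div_const_atTop hk.ne')).const_mul C
  refine (tendsto_add_atTop_iff_nat N).1 (squeeze_zero (fun j => hu _) (fun j => ?_) hgeom)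
  rw [add_comm]
  exact hbound j

theorem rpow_one_sub_le_exp {t q : ℝ} (ht : t ≤ 1) (hq : 0 ≤ q) :
    (1 - t) ^ q ≤ exp (-(t * q)) := by
  rw [neg_mul_eq_neg_mul, exp_mul]
  exact rpow_le_rpow (by linarith) (one_sub_le_exp_neg t) hq

section ScaledGamma

noncomputable def scaledGamma (ν x : ℝ) : ℝ := (2 / (ν + x)) ^ (x / 2) * Gamma ((ν + x) / 2)

theorem scaledGamma_nonneg {ν x : ℝ} (h : 0 < ν + x) : 0 ≤ scaledGamma ν x := by
  have := (Gamma_pos_of_pos (half_pos h)).le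
  unfold scaledGamma; positivity

theorem scaledGamma_add_two {ν x : ℝ} (h : 0 < ν + x) :
    scaledGamma ν (x + 2) = (1 - 2 / (ν + x + 2)) ^ ((x + 2) / 2) * scaledGamma ν x := by
  have hA : (ν + x) / 2 ≠ 0 := by positivity
  have hB : 0 < ν + x + 2 := by linarith
  have hratio : 1 - 2 / (ν + x + 2) = (ν + x) / (ν + x + 2) := by field_simp; ring
  unfold scaledGamma
  rw [show (ν + (x + 2)) / 2 = (ν + x) / 2 + 1 by ring, Gamma_add_one hA, ← add_assoc, hratio,
    show (x + 2) / 2 = x / 2 + 1 by ring, rpow_add_one (by positivity), rpow_add_one (by positivity),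
    show 2 / (ν + x + 2) = (ν + x) / (ν + x + 2) * (2 / (ν + x)) by field_simp,
    mul_rpow (by positivity) (by positivity)]
  field_simp

theorem scaledGamma_add_two_le {ν x : ℝ} (hν : 0 < ν) (hx : 0 ≤ x) (hνx : ν ≤ x + 2) :
    scaledGamma ν (x + 2) ≤ exp (-(1 / 2)) * scaledGamma ν x := by
  have hνx0 : 0 < ν + x := by linarith
  rw [scaledGamma_add_two hνx0]
  gcongr
  · exact scaledGamma_nonneg hνx0
  · calc (1 - 2 / (ν + x + 2)) ^ ((x + 2) / 2) ≤ exp (-(2 / (ν + x + 2) * ((x + 2) / 2))) :=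
          rpow_one_sub_le_exp (by rw [div_le_one (by linarith)]; linarith) (by positivity)
      _ ≤ exp (-(1 / 2)) := by
          gcongr
          rw [div_mul_div_comm, le_div_iff₀ (by positivity)]
          linarith

theorem tendsto_scaledGamma_natCast {ν : ℝ} (hν : 0 < ν) :
    Tendsto (fun m : ℕ => scaledGamma ν m) atTop (nhds 0) := by
  refine tendsto_zero_of_le_mul_of_add (s := exp (-(1 / 2))) (k := 2) (N := ⌈ν⌉₊)
    (fun m => scaledGamma_nonneg ?_) (exp_pos _).le (exp_lt_one_iff.2 (by norm_num)) two_pos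
    fun n hn => ?_
  · positivity
  have hνn : ν ≤ (n : ℝ) := (Nat.le_ceil ν).trans (Nat.cast_le.2 hn)
  push_cast
  exact scaledGamma_add_two_le hν n.cast_nonneg (by linarith)

end ScaledGamma

section RadialHessian

variable {ι : Type*} [Fintype ι]

theorem hasFDerivAt_sum_sq (y : ι → ℝ) :
    HasFDerivAt (fun y : ι → ℝ => ∑ k, y k ^ 2)
      (∑ k, (2 * y k) • ContinuousLinearMap.proj (R := ℝ) (φ := fun _ : ι => ℝ) k) y := by
  refine HasFDerivAt.fun_sum fun k _ => ?_
  have hk : HasFDerivAt (fun y : ι → ℝ => y k) (ContinuousLinearMap.proj (R := ℝ) k) y :=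
    hasFDerivAt_apply k y
  simpa [pow_two, two_mul, add_smul] using hk.fun_mul hk

theorem fderiv_comp_sum_sq_apply_single [DecidableEq ι] {φ φ' : ℝ → ℝ}
    (hφ : ∀ t, 0 ≤ t → HasDerivAt φ (φ' t) t) (y : ι → ℝ) (j : ι) :
    fderiv ℝ (fun y : ι → ℝ => φ (∑ k, y k ^ 2)) y (Pi.single j 1) =
      φ' (∑ k, y k ^ 2) * (2 * y j) := by
  have hd : HasFDerivAt (fun y : ι → ℝ => φ (∑ k, y k ^ 2)) _ y :=
    (hφ _ (by positivity)).comp_hasFDerivAt y (hasFDerivAt_sum_sq y)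
  rw [hd.fderiv]
  simp [Pi.single_apply]

theorem fderiv_fderiv_comp_sum_sq_zero [DecidableEq ι] {φ φ' : ℝ → ℝ}
    (hφ : ∀ t, 0 ≤ t → HasDerivAt φ (φ' t) t) (hφ' : DifferentiableAt ℝ φ' 0) (i j : ι) :
    fderiv ℝ (fun y => fderiv ℝ (fun y : ι → ℝ => φ (∑ k, y k ^ 2)) y (Pi.single j 1)) 0
      (Pi.single i 1) = if i = j then 2 * φ' 0 else 0 := by
  simp_rw [fderiv_comp_sum_sq_apply_single hφ]
  have houter : DifferentiableAt ℝ (fun y : ι → ℝ => φ' (∑ k, y k ^ 2)) 0 :=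
    DifferentiableAt.fun_comp' (g := φ') 0 (by simpa using hφ')
      (hasFDerivAt_sum_sq 0).differentiableAt
  have hcoord : HasFDerivAt (fun y : ι → ℝ => 2 * y j)
      ((2 : ℝ) • ContinuousLinearMap.proj (R := ℝ) (φ := fun _ : ι => ℝ) j) 0 :=
    (hasFDerivAt_apply j (0 : ι → ℝ)).const_mul (2 : ℝ)
  rw [fderiv_fun_mul houter hcoord.differentiableAt, hcoord.fderiv]
  by_cases hij : i = j <;> simp [hij, mul_comm]

end RadialHessian

theorem laplace_prefactor_eq {a : ℝ} (ha : 0 < a) (n : ℕ) :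
    (2 * π) ^ (n / 2 : ℝ) * (a ^ n) ^ (-(1 / 2) : ℝ) = (2 * π / a) ^ (n / 2 : ℝ) := by
  rw [← rpow_natCast, ← rpow_mul ha.le, show (n : ℝ) * (-(1 / 2)) = -(n / 2) by ring,
    rpow_neg ha.le, div_rpow (by positivity) ha.le, div_eq_mul_inv _ (a ^ _)]

theorem laplace_approx_eq_scaledGamma {ν x : ℝ} (hν : 0 < ν) (hx : 0 ≤ x) :
    (2 * π * ν / (ν + x)) ^ (x / 2) * (Gamma ((ν + x) / 2) / (Gamma (ν / 2) * (ν * π) ^ (x / 2))) =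
      scaledGamma ν x / Gamma (ν / 2) := by
  have hsplit : 2 * π * ν / (ν + x) = 2 / (ν + x) * (ν * π) := by ring
  have hνπ : 0 < (ν * π) ^ (x / 2) := by positivity
  rw [hsplit, mul_rpow (by positivity) (by positivity), scaledGamma]
  field_simp

/-- For the multivariate `t` density on `ℝ^d` (`ν` degrees of freedom, identity
scale, center `0`), the negative log-density `h` has unique minimum (mode of
the density) at `0`, Hessian `((ν+d)/ν)·I_d` at `0`, the standard Laplace
approximation of `∫ e^{-h} = 1` equals
`(2πν/(ν+d))^{d/2}·Γ((ν+d)/2)/(Γ(ν/2)(νπ)^{d/2})`, and this quantity tends to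
`0` as `d → ∞`: the relative error of the Laplace approximation diverges with
the dimension. -/
theorem stmt_17 (d : ℕ) (ν : ℝ) (hν : 0 < ν)
    (K : ℝ) (hK : K = Real.Gamma ((ν + d) / 2) /
      (Real.Gamma (ν / 2) * (ν * π) ^ ((d : ℝ) / 2)))
    (h : (Fin d → ℝ) → ℝ)
    (hh : ∀ y, h y = (ν + d) / 2 * Real.log (1 + (∑ i, y i ^ 2) / ν) - Real.log K) :
    (∀ y : Fin d → ℝ, y ≠ 0 → h 0 < h y) ∧
    (∀ i j : Fin d,
      fderiv ℝ (fun y => fderiv ℝ h y (Pi.single j 1)) 0 (Pi.single i 1) =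
        if i = j then (ν + d) / ν else 0) ∧
    (2 * π) ^ ((d : ℝ) / 2) * (((ν + d) / ν) ^ d) ^ (-(1/2) : ℝ) * Real.exp (-h 0) =
      (2 * π * ν / (ν + d)) ^ ((d : ℝ) / 2) *
        (Real.Gamma ((ν + d) / 2) / (Real.Gamma (ν / 2) * (ν * π) ^ ((d : ℝ) / 2))) ∧
    Tendsto (fun m : ℕ =>
        (2 * π * ν / (ν + m)) ^ ((m : ℝ) / 2) *
          (Real.Gamma ((ν + m) / 2) / (Real.Gamma (ν / 2) * (ν * π) ^ ((m : ℝ) / 2))))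
      atTop (nhds 0) := by
  have hc : 0 < (ν + d) / 2 := by positivity
  have hK0 : 0 < K := by
    have := Gamma_pos_of_pos hc
    have := Gamma_pos_of_pos (half_pos hν)
    rw [hK]; positivity
  have hh0 : h 0 = -log K := by simp [hh]
  refine ⟨fun y hy => ?_, fun i j => ?_, ?_, ?_⟩
  · have hS : 0 < ∑ i, y i ^ 2 := by
      refine lt_of_le_of_ne (by positivity) fun hS => hy (funext fun i => ?_)
      simpa using (Finset.sum_eq_zero_iff_of_nonneg (fun i _ => sq_nonneg (y i))).1 hS.symm i
    have hlog : 0 < log (1 + (∑ i, y i ^ 2) / ν) := log_pos (lt_add_of_pos_right 1 (by positivity))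
    rw [hh0, hh]
    linarith [mul_pos hc hlog]
  · have hφ : ∀ t : ℝ, 0 ≤ t → HasDerivAt (fun t => (ν + d) / 2 * log (1 + t / ν) - log K)
        ((ν + d) / 2 * (1 / ν / (1 + t / ν))) t := fun t ht =>
      ((((hasDerivAt_id t).div_const ν).const_add 1).log (by positivity)).const_mul _ |>.sub_const _
    have hφ' : DifferentiableAt ℝ (fun t : ℝ => (ν + d) / 2 * (1 / ν / (1 + t / ν))) 0 := by
      fun_prop (disch := simp)
    rw [show h = _ from funext hh, fderiv_fderiv_comp_sum_sq_zero hφ hφ' i j]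
    split_ifs
    · field_simp; ring
    · rfl
  · rw [laplace_prefactor_eq (a := (ν + d) / ν) (by positivity), hh0, neg_neg, exp_log hK0, hK]
    congr 2
    field_simp
  · simp_rw [laplace_approx_eq_scaledGamma hν (Nat.cast_nonneg _)]
    simpa using (tendsto_scaledGamma_natCast hν).div_const (Gamma (ν / 2))
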